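/- On a spherically symmetric tree with branching numbers k: ℕ₀ → ℕ, spherically symmetric decreasing measure m and increasing k, with α(n) = m(n+1)^{1/p}/(k(n+1)+1)^{1/p}, the p-intrinsic path metric d_w has nonempty Cauchy boundary if and only if ∑_n α(n) < ∞; and in that case the (truncated) distance to the boundary of a vertex x at combinatorial distance n from the root equals ∑_{k=n}^∞ α(k). -/

import Mathlib

/-!
An edge from level `n` to level `n + 1` has weight `α n`: `m` decreases and `k` increases, so
the minimum in `w` is attained at the child. Hence the level potential
`x ↦ ∑_{i < |x|} α i` is `1`-Lipschitz for `d_w`, while the ray of successive children from `x`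
has length `∑_{l ≥ |x|} α l`. Combinatorial balls are finite, so a sequence of vertices
converging to a boundary point eventually leaves each of them; the Lipschitz bound then gives
`d(x, ξ) ≥ ∑_{l ≥ |x|} α l` and bounds the partial sums of `α`. Conversely, if `α` is summable
the rays are Cauchy and converge to boundary points at exactly that distance.
-/

/-- The `w`-length of a walk in a simple graph. -/
noncomputable def walkLength {X : Type*} {G : SimpleGraph X} (w : X → X → ℝ) {x y : X}
    (q : G.Walk x y) : ℝ :=
  (q.darts.map fun d => w d.toProd.1 d.toProd.2).sum

open Filter Topology SimpleGraph

section WalkLength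

variable {X : Type*} {G : SimpleGraph X} {w : X → X → ℝ}

@[simp]
lemma walkLength_nil (x : X) : walkLength w (Walk.nil : G.Walk x x) = 0 := by
  simp [walkLength]

@[simp]
lemma walkLength_cons {x y z : X} (h : G.Adj x y) (q : G.Walk y z) :
    walkLength w (Walk.cons h q) = w x y + walkLength w q := by
  simp [walkLength]

lemma walkLength_nonneg (hw : ∀ x y, G.Adj x y → 0 ≤ w x y) {x y : X} (q : G.Walk x y) :
    0 ≤ walkLength w q := by
  induction q with
  | nil => simp
  | cons h q ih => simpa using add_nonneg (hw _ _ h) ih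

lemma abs_sub_le_walkLength {f : X → ℝ} (hf : ∀ x y, G.Adj x y → |f y - f x| ≤ w x y)
    {x y : X} (q : G.Walk x y) : |f y - f x| ≤ walkLength w q := by
  induction q with
  | nil => simp
  | @cons x z y h q ih =>
    calc |f y - f x| ≤ |f z - f x| + |f y - f z| := by
          simpa [add_comm] using abs_sub_le (f y) (f z) (f x)
      _ ≤ walkLength w (Walk.cons h q) := by
          rw [walkLength_cons]; exact add_le_add (hf x z h) ih

variable [MetricSpace X]

lemma abs_sub_le_dist_of_eq_sInf_walkLength (hG : G.Preconnected)
    (hdist : ∀ x y : X, dist x y = sInf {L : ℝ | ∃ q : G.Walk x y, L = walkLength w q})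
    {f : X → ℝ} (hf : ∀ x y, G.Adj x y → |f y - f x| ≤ w x y) (x y : X) :
    |f y - f x| ≤ dist x y := by
  rw [hdist]
  refine le_csInf ⟨_, (hG x y).some, rfl⟩ ?_
  rintro L ⟨q, rfl⟩
  exact abs_sub_le_walkLength hf q

lemma dist_le_of_adj_of_eq_sInf_walkLength (hw : ∀ x y, G.Adj x y → 0 ≤ w x y)
    (hdist : ∀ x y : X, dist x y = sInf {L : ℝ | ∃ q : G.Walk x y, L = walkLength w q})
    {x y : X} (h : G.Adj x y) : dist x y ≤ w x y := by
  rw [hdist]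
  refine csInf_le ⟨0, ?_⟩ ⟨Walk.cons h Walk.nil, by simp⟩
  rintro L ⟨q, rfl⟩
  exact walkLength_nonneg hw q

end WalkLength

lemma SimpleGraph.Connected.finite_setOf_dist_le {X : Type*} {G : SimpleGraph X}
    (hG : G.Connected) (hlf : ∀ x, (G.neighborSet x).Finite) (o : X) (n : ℕ) :
    {x | G.dist o x ≤ n}.Finite := by
  induction n with
  | zero => simp [hG.dist_eq_zero_iff]
  | succ n ih =>
    refine (ih.biUnion fun y _ => (hlf y).insert y).subset fun x hx => ?_
    obtain ⟨q, hq⟩ := hG.exists_walk_length_eq_dist x o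
    cases q with
    | nil => exact Set.mem_biUnion (x := o) (by simp) (Set.mem_insert o _)
    | @cons _ y _ h q =>
      refine Set.mem_biUnion (x := y) ?_ (Set.mem_insert_of_mem _ h.symm)
      have := G.dist_le q
      simp only [Set.mem_ofPred_eq, Walk.length_cons, dist_comm (u := o)] at hx hq ⊢
      omega

section Completion

open UniformSpace Finset

variable {X : Type*} [MetricSpace X]

lemma UniformSpace.Completion.exists_seq_tendsto_coe (ξ : Completion X) :
    ∃ z : ℕ → X, Tendsto (fun j => (z j : Completion X)) atTop (𝓝 ξ) := by
  obtain ⟨u, hu, hlim⟩ := mem_closure_iff_seq_limit.mp (Completion.denseRange_coe ξ)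
  choose z hz using hu
  exact ⟨z, by simpa only [hz] using hlim⟩

lemma eventually_notMem_of_tendsto_coe_completion {z : ℕ → X} {ξ : Completion X}
    (hξ : ξ ∉ Set.range ((↑) : X → Completion X))
    (hz : Tendsto (fun j => (z j : Completion X)) atTop (𝓝 ξ)) {F : Set X} (hF : F.Finite) :
    ∀ᶠ j in atTop, z j ∉ F := by
  have hne : ∀ b ∈ F, ∀ᶠ j in atTop, z j ≠ b := fun b _ =>
    (hz.eventually_ne fun h => hξ ⟨b, h.symm⟩).mono fun j hj h => hj (h ▸ rfl)
  filter_upwards [(eventually_all_finite hF).mpr hne] with j hj hmem using hj _ hmem rfl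

variable {ℓ : X → ℕ} {α : ℕ → ℝ}

lemma sum_range_sub_le_dist_of_notMem_range (hα : ∀ n, 0 ≤ α n)
    (hfin : ∀ R, {x | ℓ x ≤ R}.Finite)
    (hlip : ∀ x y, ∑ i ∈ range (ℓ y), α i - ∑ i ∈ range (ℓ x), α i ≤ dist x y)
    {ξ : Completion X} (hξ : ξ ∉ Set.range ((↑) : X → Completion X)) (x : X) (n : ℕ) :
    ∑ i ∈ range n, α i - ∑ i ∈ range (ℓ x), α i ≤ dist (x : Completion X) ξ := by
  obtain ⟨z, hz⟩ := Completion.exists_seq_tendsto_coe ξ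
  refine ge_of_tendsto (tendsto_const_nhds.dist hz) ?_
  filter_upwards [eventually_notMem_of_tendsto_coe_completion hξ hz (hfin n)] with j hj
  rw [Completion.dist_eq]
  refine le_trans (sub_le_sub_right ?_ _) (hlip x (z j))
  refine sum_le_sum_of_subset_of_nonneg (range_subset_range.mpr ?_) fun i _ _ => hα i
  exact (not_le.mp hj).le

lemma notMem_range_of_tendsto_level_atTop (hα : ∀ n, 0 < α n)
    (hlip : ∀ x y, ∑ i ∈ range (ℓ y), α i - ∑ i ∈ range (ℓ x), α i ≤ dist x y)
    {u : ℕ → X} (hu : Tendsto (ℓ ∘ u) atTop atTop) {ξ : Completion X}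
    (hξ : Tendsto (fun j => (u j : Completion X)) atTop (𝓝 ξ)) :
    ξ ∉ Set.range ((↑) : X → Completion X) := by
  rintro ⟨y, rfl⟩
  have hd : Tendsto (fun j => dist (u j) y) atTop (𝓝 0) := by
    simpa only [Completion.dist_eq] using tendsto_iff_dist_tendsto_zero.mp hξ
  refine (hα (ℓ y)).not_ge (ge_of_tendsto hd ?_)
  filter_upwards [hu.eventually_ge_atTop (ℓ y + 1)] with j hj
  calc α (ℓ y) = ∑ i ∈ range (ℓ y + 1), α i - ∑ i ∈ range (ℓ y), α i := by
        rw [sum_range_succ]; ring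
    _ ≤ ∑ i ∈ range (ℓ (u j)), α i - ∑ i ∈ range (ℓ y), α i :=
        sub_le_sub_right (sum_le_sum_of_subset_of_nonneg (range_subset_range.mpr hj)
          fun i _ _ => (hα i).le) _
    _ ≤ dist (u j) y := dist_comm y (u j) ▸ hlip y (u j)

lemma exists_notMem_range_dist_le_tsum (hα : ∀ n, 0 < α n) (hsum : Summable α)
    (hlip : ∀ x y, ∑ i ∈ range (ℓ y), α i - ∑ i ∈ range (ℓ x), α i ≤ dist x y)
    (hstep : ∀ x, ∃ y, ℓ y = ℓ x + 1 ∧ dist x y ≤ α (ℓ x)) (a : X) :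
    ∃ ξ ∉ Set.range ((↑) : X → Completion X),
      dist (a : Completion X) ξ ≤ ∑' l, α (ℓ a + l) := by
  choose c hc_level hc_dist using hstep
  have hlevel (j : ℕ) : ℓ (c^[j] a) = ℓ a + j := by
    induction j with
    | zero => rfl
    | succ j ih => rw [Function.iterate_succ_apply', hc_level, ih, add_assoc]
  have hray (j : ℕ) : dist (c^[j] a : Completion X) (c^[j + 1] a) ≤ α (ℓ a + j) := by
    rw [Completion.dist_eq, Function.iterate_succ_apply', ← hlevel]
    exact hc_dist _
  have htail : Summable fun j => α (ℓ a + j) := by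
    simpa only [add_comm] using (summable_nat_add_iff (ℓ a)).mpr hsum
  obtain ⟨ξ, hξ⟩ := cauchySeq_tendsto_of_complete (cauchySeq_of_dist_le_of_summable _ hray htail)
  refine ⟨ξ, notMem_range_of_tendsto_level_atTop hα hlip ?_ hξ, ?_⟩
  · refine tendsto_atTop_mono (fun j => ?_) tendsto_id
    simp [hlevel]
  · simpa using dist_le_tsum_of_dist_le_of_tendsto₀ _ hray htail hξ

theorem nonempty_compl_range_coe_iff_summable [Nonempty X] (hα : ∀ n, 0 < α n)
    (hfin : ∀ R, {x | ℓ x ≤ R}.Finite)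
    (hlip : ∀ x y, ∑ i ∈ range (ℓ y), α i - ∑ i ∈ range (ℓ x), α i ≤ dist x y)
    (hstep : ∀ x, ∃ y, ℓ y = ℓ x + 1 ∧ dist x y ≤ α (ℓ x)) :
    (Set.range ((↑) : X → Completion X))ᶜ.Nonempty ↔ Summable α := by
  obtain ⟨x⟩ := ‹Nonempty X›
  constructor
  · rintro ⟨ξ, hξ⟩
    refine summable_of_sum_range_le (c := dist (x : Completion X) ξ + ∑ i ∈ range (ℓ x), α i)
      (fun n => (hα n).le) fun n => ?_
    have := sum_range_sub_le_dist_of_notMem_range (fun n => (hα n).le) hfin hlip hξ x n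
    exact sub_le_iff_le_add.mp this
  · intro hsum
    obtain ⟨ξ, hξ, -⟩ := exists_notMem_range_dist_le_tsum hα hsum hlip hstep x
    exact ⟨ξ, hξ⟩

theorem infEDist_compl_range_coe_eq_tsum (hα : ∀ n, 0 < α n)
    (hfin : ∀ R, {x | ℓ x ≤ R}.Finite)
    (hlip : ∀ x y, ∑ i ∈ range (ℓ y), α i - ∑ i ∈ range (ℓ x), α i ≤ dist x y)
    (hstep : ∀ x, ∃ y, ℓ y = ℓ x + 1 ∧ dist x y ≤ α (ℓ x)) (hsum : Summable α) (x : X) :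
    Metric.infEDist (x : Completion X) (Set.range ((↑) : X → Completion X))ᶜ =
      ENNReal.ofReal (∑' l, α (ℓ x + l)) := by
  refine le_antisymm ?_ (Metric.le_infEDist.mpr fun ξ hξ => ?_)
  · obtain ⟨ξ, hξ, hdist⟩ := exists_notMem_range_dist_le_tsum hα hsum hlip hstep x
    exact (Metric.infEDist_le_edist_of_mem hξ).trans
      (edist_dist (x : Completion X) ξ ▸ ENNReal.ofReal_le_ofReal hdist)
  · rw [edist_dist]
    refine ENNReal.ofReal_le_ofReal ?_
    have htail : ∑' l, α (ℓ x + l) = ∑' l, α l - ∑ i ∈ range (ℓ x), α i := by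
      rw [← hsum.sum_add_tsum_nat_add (ℓ x), add_sub_cancel_left]
      simp only [add_comm]
    rw [htail]
    exact le_of_tendsto (hsum.hasSum.tendsto_sum_nat.sub_const _) <| .of_forall <|
      sum_range_sub_le_dist_of_notMem_range (fun n => (hα n).le) hfin hlip hξ x

end Completion

section Tree

open Finset

variable {X : Type*} {G : SimpleGraph X}

lemma SimpleGraph.IsTree.ncard_neighborSet (hT : G.IsTree) (o : X) {x : X}
    (hx : (G.neighborSet x).Finite) :
    (G.neighborSet x).ncard = (G.neighborSet x ∩ {y | G.dist o y = G.dist o x + 1}).ncard +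
      (G.neighborSet x ∩ {y | G.dist o y + 1 = G.dist o x}).ncard := by
  rw [← Set.ncard_union_eq _ (hx.subset Set.inter_subset_left) (hx.subset Set.inter_subset_left),
    ← Set.inter_union_distrib_left, Set.inter_eq_left.mpr]
  · intro y hy
    rcases hT.dist_eq_dist_add_one_of_adj o hy with h | h
    · exact Or.inr h.symm
    · exact Or.inl h
  · refine Set.disjoint_left.mpr fun y h₁ h₂ => ?_
    simp only [Set.mem_inter_iff, Set.mem_ofPred_eq] at h₁ h₂
    omega

lemma SimpleGraph.IsTree.abs_sub_sum_range_dist_eq_of_adj (hT : G.IsTree) (o : X)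
    {w : X → X → ℝ} {α : ℕ → ℝ} (hα : ∀ n, 0 ≤ α n) (hsymm : ∀ x y, w x y = w y x)
    (hedge : ∀ x y, G.Adj x y → G.dist o y = G.dist o x + 1 → w x y = α (G.dist o x))
    {x y : X} (h : G.Adj x y) :
    |∑ i ∈ range (G.dist o y), α i - ∑ i ∈ range (G.dist o x), α i| = w x y := by
  rcases hT.dist_eq_dist_add_one_of_adj o h with hxy | hxy
  · rw [hsymm, hedge y x h.symm hxy, hxy, sum_range_succ, sub_add_cancel_left, abs_neg,
      abs_of_nonneg (hα _)]
  · rw [hedge x y h hxy, hxy, sum_range_succ, add_sub_cancel_left, abs_of_nonneg (hα _)]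

lemma weight_eq_of_dist_eq_add_one {o : X} {p : ℝ} (hp : 0 < p)
    {k : ℕ → ℕ} (hk₀ : 0 < k 0) (hk_mono : Monotone k)
    {mu : ℕ → ℝ} (hmu_pos : ∀ n, 0 < mu n) (hmu_dec : Antitone mu)
    {m : X → ℝ} (hm : ∀ x, m x = mu (G.dist o x))
    (hdeg_root : (G.neighborSet o).ncard = k 0)
    (hdeg : ∀ x, x ≠ o → (G.neighborSet x).ncard = k (G.dist o x) + 1)
    {w : X → X → ℝ}
    (hw : ∀ x y, w x y =
      min ((m x) ^ (1 / p) / ((G.neighborSet x).ncard : ℝ) ^ (1 / p))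
          ((m y) ^ (1 / p) / ((G.neighborSet y).ncard : ℝ) ^ (1 / p)))
    {α : ℕ → ℝ} (hα : ∀ n, α n = (mu (n + 1)) ^ (1 / p) / ((k (n + 1) : ℝ) + 1) ^ (1 / p))
    {x y : X} (h : G.dist o y = G.dist o x + 1) :
    w x y = α (G.dist o x) := by
  have hy : y ≠ o := by
    rintro rfl
    simp at h
  have hdeg_x :
      0 < (G.neighborSet x).ncard ∧ (G.neighborSet x).ncard ≤ k (G.dist o x + 1) + 1 := by
    by_cases hx : x = o
    · subst hx
      have := hk_mono (Nat.zero_le (G.dist x x + 1))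
      rw [hdeg_root]
      omega
    · have : k (G.dist o x) ≤ k (G.dist o x + 1) := hk_mono (Nat.le_succ _)
      rw [hdeg x hx]
      omega
  have hdeg_x' : (0 : ℝ) < (G.neighborSet x).ncard ∧
      ((G.neighborSet x).ncard : ℝ) ≤ k (G.dist o x + 1) + 1 := by
    exact_mod_cast hdeg_x
  rw [hw, hα, hm x, hm y, h, hdeg y hy, h, min_eq_right]
  · push_cast; rfl
  · push_cast
    rw [← Real.div_rpow (hmu_pos _).le (by positivity),
      ← Real.div_rpow (hmu_pos _).le (by positivity)]
    exact Real.rpow_le_rpow (by have := hmu_pos (G.dist o x + 1); positivity)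
      (div_le_div₀ (hmu_pos _).le (hmu_dec (Nat.le_succ _)) hdeg_x'.1 hdeg_x'.2) (by positivity)

end Tree

theorem sphericallySymmetricTree_boundary_dist_general {X : Type*} [MetricSpace X]
    (G : SimpleGraph X) (hT : G.IsTree) (hlf : ∀ x : X, (G.neighborSet x).Finite)
    (o : X) (p : ℝ) (hp : 1 < p)
    (k : ℕ → ℕ) (hk_pos : ∀ n, 0 < k n) (hk_mono : Monotone k)
    (mu : ℕ → ℝ) (hmu_pos : ∀ n, 0 < mu n) (hmu_dec : Antitone mu)
    (m : X → ℝ) (hm : ∀ x, m x = mu (G.dist o x))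
    (hdeg_out : ∀ x : X,
      (G.neighborSet x ∩ {y | G.dist o y = G.dist o x + 1}).ncard = k (G.dist o x))
    (hdeg_in : ∀ x : X, x ≠ o →
      (G.neighborSet x ∩ {y | G.dist o y + 1 = G.dist o x}).ncard = 1)
    (w : X → X → ℝ)
    (hw : ∀ x y, w x y =
      min ((m x) ^ (1 / p) / ((G.neighborSet x).ncard : ℝ) ^ (1 / p))
          ((m y) ^ (1 / p) / ((G.neighborSet y).ncard : ℝ) ^ (1 / p)))
    (hdist : ∀ x y : X, dist x y = sInf {L : ℝ | ∃ q : G.Walk x y, L = walkLength w q})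
    (α : ℕ → ℝ)
    (hα : ∀ n, α n = (mu (n + 1)) ^ (1 / p) / ((k (n + 1) : ℝ) + 1) ^ (1 / p)) :
    ((Set.range ((↑) : X → UniformSpace.Completion X))ᶜ.Nonempty ↔ Summable α) ∧
    (Summable α → ∀ x : X, x ≠ o →
      min (EMetric.infEdist (↑x : UniformSpace.Completion X)
            (Set.range ((↑) : X → UniformSpace.Completion X))ᶜ)
          (ENNReal.ofReal (∑' j : ℕ, α (j + 1))) =
        ENNReal.ofReal (∑' l : ℕ, α (G.dist o x + l))) := by
  have hα_pos (n : ℕ) : 0 < α n := by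
    rw [hα]
    have := hmu_pos (n + 1)
    positivity
  have hdeg_root : (G.neighborSet o).ncard = k 0 := by
    rw [hT.ncard_neighborSet o (hlf o), hdeg_out o]
    simp
  have hdeg (x : X) (hx : x ≠ o) : (G.neighborSet x).ncard = k (G.dist o x) + 1 := by
    rw [hT.ncard_neighborSet o (hlf x), hdeg_out x, hdeg_in x hx]
  have hedge (x y : X) (h : G.dist o y = G.dist o x + 1) : w x y = α (G.dist o x) :=
    weight_eq_of_dist_eq_add_one (by linarith) (hk_pos 0) hk_mono hmu_pos hmu_dec hm hdeg_root
      hdeg hw hα h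
  have hadj {x y : X} (h : G.Adj x y) :
      |∑ i ∈ Finset.range (G.dist o y), α i - ∑ i ∈ Finset.range (G.dist o x), α i| = w x y :=
    hT.abs_sub_sum_range_dist_eq_of_adj o (fun n => (hα_pos n).le)
      (fun x y => by rw [hw, hw, min_comm]) (fun x y _ => hedge x y) h
  have hlip (x y : X) :
      ∑ i ∈ Finset.range (G.dist o y), α i - ∑ i ∈ Finset.range (G.dist o x), α i ≤ dist x y :=
    (le_abs_self _).trans <| abs_sub_le_dist_of_eq_sInf_walkLength
      hT.connected.preconnected hdist (fun _ _ h => (hadj h).le) x y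
  have hstep (x : X) : ∃ y, G.dist o y = G.dist o x + 1 ∧ dist x y ≤ α (G.dist o x) := by
    obtain ⟨y, hxy, hy⟩ := Set.nonempty_of_ncard_ne_zero <| (hdeg_out x).trans_ne (hk_pos _).ne'
    refine ⟨y, hy, (hedge x y hy) ▸ dist_le_of_adj_of_eq_sInf_walkLength ?_ hdist hxy⟩
    exact fun _ _ h => hadj h ▸ abs_nonneg _
  have hfin := hT.connected.finite_setOf_dist_le hlf o
  have : Nonempty X := ⟨o⟩
  refine ⟨nonempty_compl_range_coe_iff_summable hα_pos hfin hlip hstep, fun hsum x hx => ?_⟩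
  have hinf := infEDist_compl_range_coe_eq_tsum hα_pos hfin hlip hstep hsum x
  refine (min_eq_left (hinf.trans_le (ENNReal.ofReal_le_ofReal ?_))).trans hinf
  have hx₁ : 1 ≤ G.dist o x := hT.connected.pos_dist_of_ne (Ne.symm hx)
  calc ∑' l, α (G.dist o x + l) = ∑' l, α (l + (G.dist o x - 1) + 1) :=
        tsum_congr fun l => by congr 1; omega
    _ ≤ ∑' j, α (j + 1) := tsum_comp_le_tsum_of_inj ((summable_nat_add_iff 1).mpr hsum)
        (fun j => (hα_pos _).le) (add_left_injective _)

/-- On a spherically symmetric tree with branching numbers `k` (increasing), spherically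
symmetric decreasing measure `m`, and the `p`-intrinsic path metric induced by
`w(x,y) = min(m(x)^{1/p}/deg(x)^{1/p}, m(y)^{1/p}/deg(y)^{1/p})`, the Cauchy boundary is
nonempty iff `α(n) = m(n+1)^{1/p}/(k(n+1)+1)^{1/p}` is summable; in that case the
truncated distance to the boundary (truncation constant `D = ∑_{j≥1} α(j)`) of a vertex
at combinatorial distance `n ≥ 1` from the root equals `∑_{l=n}^∞ α(l)`. -/
theorem sphericallySymmetricTree_boundary_dist {X : Type*} [Countable X] [MetricSpace X]
    (G : SimpleGraph X) (hT : G.IsTree) (hlf : ∀ x : X, (G.neighborSet x).Finite)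
    (o : X) (p : ℝ) (hp : 1 < p)
    (k : ℕ → ℕ) (hk_pos : ∀ n, 0 < k n) (hk_mono : Monotone k)
    (mu : ℕ → ℝ) (hmu_pos : ∀ n, 0 < mu n) (hmu_dec : Antitone mu)
    (m : X → ℝ) (hm : ∀ x, m x = mu (G.dist o x))
    (hdeg_out : ∀ x : X,
      (G.neighborSet x ∩ {y | G.dist o y = G.dist o x + 1}).ncard = k (G.dist o x))
    (hdeg_in : ∀ x : X, x ≠ o →
      (G.neighborSet x ∩ {y | G.dist o y + 1 = G.dist o x}).ncard = 1)
    (w : X → X → ℝ)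
    (hw : ∀ x y, w x y =
      min ((m x) ^ (1 / p) / ((G.neighborSet x).ncard : ℝ) ^ (1 / p))
          ((m y) ^ (1 / p) / ((G.neighborSet y).ncard : ℝ) ^ (1 / p)))
    (hdist : ∀ x y : X, dist x y = sInf {L : ℝ | ∃ q : G.Walk x y, L = walkLength w q})
    (α : ℕ → ℝ)
    (hα : ∀ n, α n = (mu (n + 1)) ^ (1 / p) / ((k (n + 1) : ℝ) + 1) ^ (1 / p)) :
    ((Set.range ((↑) : X → UniformSpace.Completion X))ᶜ.Nonempty ↔ Summable α) ∧
    (Summable α → ∀ x : X, x ≠ o →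
      min (EMetric.infEdist (↑x : UniformSpace.Completion X)
            (Set.range ((↑) : X → UniformSpace.Completion X))ᶜ)
          (ENNReal.ofReal (∑' j : ℕ, α (j + 1))) =
        ENNReal.ofReal (∑' l : ℕ, α (G.dist o x + l))) :=
  sphericallySymmetricTree_boundary_dist_general G hT hlf o p hp k hk_pos hk_mono mu hmu_pos hmu_dec
    m hm hdeg_out hdeg_in w hw hdist α hα
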